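/- Let p be a prime and let λ : ℤ_{>0} → ℝ be a function satisfying λ(1) = 1, |λ(n)| ≤ τ(n) for all n ≥ 1, and the Hecke relation λ(m)·λ(n) = Σ_{d | gcd(m,n)} λ(m·n/d²) for all m, n ≥ 1. Fix a real number s > 1 and define real numbers c_r by c_0 := 1, c_1 := λ(p)/(1 + p^{−s}), and c_r := λ(p)·c_{r−1} − c_{r−2} for r ≥ 2. Then for every integer r ≥ 0 the series involved converge absolutely and Σ_{n ≥ 1} λ(n)·λ(n·p^r)·n^{−s} = c_r · Σ_{n ≥ 1} λ(n)²·n^{−s}. -/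

import Mathlib

/-!
Since `|λ(n)| ≤ τ(n)` and `∑ τ(n)² n^{-s} < ∞`, all series converge absolutely. Put
`S_r = ∑ λ(n) λ(n p^r) n^{-s}`. At a prime `p` the Hecke relation reads
`λ(p) λ(m) = λ(p m) + [p ∣ m] λ(m / p)`. For `m = n p^{r+1}` it gives
`S_{r+2} = λ(p) S_{r+1} - S_r`, the recurrence of `c_r`; for `m = n` it gives
`λ(p) S_0 = S_1 + p^{-s} S_1`, the second sum being reindexed by `n = p m`.
Hence `S_r = c_r S_0` by two-step induction.
-/

open Finset

theorem Nat.gcd_mul_div_gcd_mul_div_gcd (a b : ℕ) :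
    a.gcd b * (a / a.gcd b) * (b / a.gcd b) = a.lcm b := by
  rw [Nat.mul_div_cancel' (Nat.gcd_dvd_left a b), Nat.lcm,
    Nat.mul_div_assoc _ (Nat.gcd_dvd_right a b)]

/-- With `g = gcd d₁ d₂`, a pair of divisors `d₁, d₂` of `n` is recovered from the factorisation
`n = g · (d₁ / g) · (d₂ / g) · (n / lcm d₁ d₂)`, so `∑ τ(n)² n^{-s} ≤ ζ(s)⁴`. -/
theorem summable_card_divisors_sq_mul_rpow {s : ℝ} (hs : 1 < s) :
    Summable fun n : ℕ => (n.divisors.card : ℝ) ^ 2 * (n : ℝ) ^ (-s) := by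
  have hζ : Summable fun n : ℕ => (n : ℝ) ^ (-s) := Real.summable_nat_rpow.mpr (by linarith)
  have hζ0 : 0 ≤ fun n : ℕ => (n : ℝ) ^ (-s) := fun n => by positivity
  have hG : Summable fun q : ℕ × ℕ × ℕ × ℕ =>
      ((q.1 * q.2.1 * q.2.2.1 * q.2.2.2 : ℕ) : ℝ) ^ (-s) := by
    refine (hζ.mul_of_nonneg (hζ.mul_of_nonneg (hζ.mul_of_nonneg hζ hζ0 hζ0) hζ0 fun _ => by
      positivity) hζ0 fun _ => by positivity).congr fun q => ?_
    simp only [Nat.cast_mul]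
    rw [Real.mul_rpow (by positivity) (by positivity),
      Real.mul_rpow (by positivity) (by positivity), Real.mul_rpow (by positivity) (by positivity)]
    ring
  let φ : (Σ n : ℕ, ↥(n.divisors ×ˢ n.divisors)) → ℕ × ℕ × ℕ × ℕ := fun x =>
    let d₁ := x.2.1.1; let d₂ := x.2.1.2
    (d₁.gcd d₂, d₁ / d₁.gcd d₂, d₂ / d₁.gcd d₂, x.1 / d₁.lcm d₂)
  have hφ_prod : ∀ x, (φ x).1 * (φ x).2.1 * (φ x).2.2.1 * (φ x).2.2.2 = x.1 := by
    rintro ⟨n, ⟨d₁, d₂⟩, hd⟩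
    simp only [mem_product, Nat.mem_divisors] at hd
    simp only [φ, Nat.gcd_mul_div_gcd_mul_div_gcd]
    exact Nat.mul_div_cancel' (Nat.lcm_dvd hd.1.1 hd.2.1)
  have hφ_left : ∀ x, (φ x).1 * (φ x).2.1 = x.2.1.1 := fun x =>
    Nat.mul_div_cancel' (Nat.gcd_dvd_left _ _)
  have hφ_right : ∀ x, (φ x).1 * (φ x).2.2.1 = x.2.1.2 := fun x =>
    Nat.mul_div_cancel' (Nat.gcd_dvd_right _ _)
  have hφ_inj : Function.Injective φ := by
    rintro ⟨n, ⟨d₁, d₂⟩, hd⟩ ⟨n', ⟨d₁', d₂'⟩, hd'⟩ h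
    obtain rfl : n = n' := by
      simpa only [hφ_prod] using congrArg (fun q => q.1 * q.2.1 * q.2.2.1 * q.2.2.2) h
    obtain rfl : d₁ = d₁' := by simpa only [hφ_left] using congrArg (fun q => q.1 * q.2.1) h
    obtain rfl : d₂ = d₂' := by simpa only [hφ_right] using congrArg (fun q => q.1 * q.2.2.1) h
    rfl
  refine (hG.comp_injective hφ_inj).sigma.congr fun n => ?_
  simp only [Function.comp_apply, hφ_prod, tsum_fintype, sum_const, card_univ, Fintype.card_coe,
    card_product, nsmul_eq_mul]
  push_cast
  ring

theorem Nat.Prime.sum_divisors_gcd {p : ℕ} (hp : p.Prime) {M : Type*} [AddCommMonoid M]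
    (f : ℕ → M) (m : ℕ) :
    ∑ d ∈ (p.gcd m).divisors, f (p * m / d ^ 2) = f (p * m) + if p ∣ m then f (m / p) else 0 := by
  by_cases hpm : p ∣ m
  · obtain ⟨t, rfl⟩ := hpm
    rw [Nat.gcd_eq_left (dvd_mul_right p t), hp.divisors,
      sum_insert (by simpa using hp.one_lt.ne), sum_singleton, if_pos (dvd_mul_right p t),
      one_pow, Nat.div_one, ← mul_assoc, ← sq, Nat.mul_div_cancel_left _ (pow_pos hp.pos 2),
      Nat.mul_div_cancel_left _ hp.pos]
  · rw [(hp.coprime_iff_not_dvd.mpr hpm).gcd_eq_one, Nat.divisors_one, sum_singleton,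
      if_neg hpm, one_pow, Nat.div_one, add_zero]

theorem tsum_ite_dvd {M : Type*} [AddCommMonoid M] [TopologicalSpace M] (f : ℕ → M) {p : ℕ}
    (hp : p ≠ 0) : ∑' n, (if p ∣ n then f n else 0) = ∑' m, f (p * m) := by
  refine ((mul_right_injective₀ hp).tsum_eq fun n hn => ?_).symm.trans (by simp)
  by_contra h
  exact hn (if_neg fun ⟨m, hm⟩ => h ⟨m, hm.symm⟩)

theorem eq_mul_of_two_step_recurrence {R : Type*} [CommRing R] {u c : ℕ → R} {a A : R}
    (hu₀ : u 0 = c 0 * A) (hu₁ : u 1 = c 1 * A) (hu : ∀ k, u (k + 2) = a * u (k + 1) - u k)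
    (hc : ∀ k, c (k + 2) = a * c (k + 1) - c k) (r : ℕ) : u r = c r * A := by
  induction r using Nat.twoStepInduction with
  | zero => exact hu₀
  | one => exact hu₁
  | more k ih₀ ih₁ => rw [hu, hc, ih₀, ih₁]; ring

def IsHeckeMultiplicative (lam : ℕ → ℝ) : Prop :=
  ∀ m n : ℕ, 1 ≤ m → 1 ≤ n → lam m * lam n = ∑ d ∈ (Nat.gcd m n).divisors, lam (m * n / d ^ 2)

section DirichletSeries

variable {lam : ℕ → ℝ} {s : ℝ}

theorem summable_sq_mul_rpow_of_abs_le_card_divisors (hs : 1 < s)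
    (hlam : ∀ n : ℕ, 1 ≤ n → |lam n| ≤ n.divisors.card) :
    Summable fun n : ℕ => lam n ^ 2 * (n : ℝ) ^ (-s) := by
  refine (summable_card_divisors_sq_mul_rpow hs).of_nonneg_of_le (fun n => by positivity)
    fun n => ?_
  rcases n.eq_zero_or_pos with rfl | hn
  · simp [Real.zero_rpow (neg_ne_zero.mpr (zero_lt_one.trans hs).ne')]
  · exact mul_le_mul_of_nonneg_right
      (sq_le_sq' (neg_le_of_abs_le (hlam n hn)) (le_of_abs_le (hlam n hn))) (by positivity)

theorem Summable.comp_mul_sq_mul_rpow (hsq : Summable fun n : ℕ => lam n ^ 2 * (n : ℝ) ^ (-s))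
    {m : ℕ} (hm : m ≠ 0) : Summable fun n : ℕ => lam (n * m) ^ 2 * (n : ℝ) ^ (-s) := by
  refine ((hsq.comp_injective (mul_left_injective₀ hm)).mul_left ((m : ℝ) ^ s)).congr fun n => ?_
  have hm' : (0 : ℝ) < m := by positivity
  simp only [Function.comp_apply, Nat.cast_mul, Real.mul_rpow n.cast_nonneg hm'.le,
    Real.rpow_neg hm'.le]
  field_simp

theorem Summable.mul_comp_mul_rpow (hsq : Summable fun n : ℕ => lam n ^ 2 * (n : ℝ) ^ (-s))
    {m : ℕ} (hm : m ≠ 0) : Summable fun n : ℕ => lam n * lam (n * m) * (n : ℝ) ^ (-s) := by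
  refine Summable.of_norm_bounded ((hsq.add (hsq.comp_mul_sq_mul_rpow hm)).div_const 2) fun n => ?_
  have hw : (0 : ℝ) ≤ (n : ℝ) ^ (-s) := by positivity
  rw [Real.norm_eq_abs, abs_mul, abs_mul, abs_of_nonneg hw]
  nlinarith [mul_nonneg (sq_nonneg (|lam n| - |lam (n * m)|)) hw, sq_abs (lam n),
    sq_abs (lam (n * m))]

theorem IsHeckeMultiplicative.prime_mul (hhecke : IsHeckeMultiplicative lam) {p : ℕ}
    (hp : p.Prime) {m : ℕ} (hm : 1 ≤ m) :
    lam p * lam m = lam (p * m) + if p ∣ m then lam (m / p) else 0 :=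
  (hhecke p m hp.one_le hm).trans (hp.sum_divisors_gcd lam m)

theorem tsum_mul_comp_mul_prime_pow_add_two {p : ℕ} (hhecke : IsHeckeMultiplicative lam)
    (hp : p.Prime) (hs : s ≠ 0) (hsq : Summable fun n : ℕ => lam n ^ 2 * (n : ℝ) ^ (-s))
    (k : ℕ) :
    ∑' n : ℕ, lam n * lam (n * p ^ (k + 2)) * (n : ℝ) ^ (-s) =
      lam p * ∑' n : ℕ, lam n * lam (n * p ^ (k + 1)) * (n : ℝ) ^ (-s) -
        ∑' n : ℕ, lam n * lam (n * p ^ k) * (n : ℝ) ^ (-s) := by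
  have hterm : ∀ n : ℕ, lam n * lam (n * p ^ (k + 2)) * (n : ℝ) ^ (-s) =
      lam p * (lam n * lam (n * p ^ (k + 1)) * (n : ℝ) ^ (-s)) -
        lam n * lam (n * p ^ k) * (n : ℝ) ^ (-s) := by
    intro n
    rcases n.eq_zero_or_pos with rfl | hn
    · simp [Real.zero_rpow (neg_ne_zero.mpr hs)]
    have h := hhecke.prime_mul hp (m := n * p ^ (k + 1)) (Nat.mul_pos hn (pow_pos hp.pos _))
    rw [if_pos (Dvd.dvd.mul_left (dvd_pow_self p k.succ_ne_zero) n),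
      show p * (n * p ^ (k + 1)) = n * p ^ (k + 2) by ring,
      Nat.div_eq_of_eq_mul_left hp.pos (by ring : n * p ^ (k + 1) = n * p ^ k * p)] at h
    linear_combination (-(lam n * (n : ℝ) ^ (-s))) * h
  have hsum (r : ℕ) := hsq.mul_comp_mul_rpow (pow_ne_zero r hp.ne_zero)
  rw [tsum_congr hterm, ((hsum (k + 1)).mul_left (lam p)).tsum_sub (hsum k), tsum_mul_left]

theorem one_add_rpow_mul_tsum_mul_comp_mul_prime {p : ℕ} (hhecke : IsHeckeMultiplicative lam)
    (hp : p.Prime) (hs : s ≠ 0) (hsq : Summable fun n : ℕ => lam n ^ 2 * (n : ℝ) ^ (-s)) :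
    (1 + (p : ℝ) ^ (-s)) * ∑' n : ℕ, lam n * lam (n * p) * (n : ℝ) ^ (-s) =
      lam p * ∑' n : ℕ, lam n ^ 2 * (n : ℝ) ^ (-s) := by
  set g : ℕ → ℝ := fun n => if p ∣ n then lam n * lam (n / p) * (n : ℝ) ^ (-s) else 0
  have hterm : ∀ n, g n =
      lam p * (lam n ^ 2 * (n : ℝ) ^ (-s)) - lam n * lam (n * p) * (n : ℝ) ^ (-s) := by
    intro n
    rcases n.eq_zero_or_pos with rfl | hn
    · simp [g, Real.zero_rpow (neg_ne_zero.mpr hs)]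
    have h := hhecke.prime_mul hp hn
    have hg : g n = lam n * (n : ℝ) ^ (-s) * (if p ∣ n then lam (n / p) else 0) := by
      simp only [g]; split_ifs <;> ring
    rw [mul_comm p n] at h
    rw [hg]
    linear_combination (-(lam n * (n : ℝ) ^ (-s))) * h
  have hg_reindex :
      ∑' n, g n = (p : ℝ) ^ (-s) * ∑' n : ℕ, lam n * lam (n * p) * (n : ℝ) ^ (-s) := by
    rw [tsum_ite_dvd _ hp.ne_zero, ← tsum_mul_left]
    refine tsum_congr fun m => ?_
    rw [Nat.mul_div_cancel_left m hp.pos, Nat.cast_mul,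
      Real.mul_rpow p.cast_nonneg m.cast_nonneg, mul_comm m p]
    ring
  have hg_sub : ∑' n, g n = lam p * ∑' n : ℕ, lam n ^ 2 * (n : ℝ) ^ (-s) -
      ∑' n : ℕ, lam n * lam (n * p) * (n : ℝ) ^ (-s) := by
    rw [tsum_congr hterm, (hsq.mul_left _).tsum_sub (hsq.mul_comp_mul_rpow hp.ne_zero),
      tsum_mul_left]
  linear_combination hg_reindex.symm.trans hg_sub

end DirichletSeries

theorem stmt_6 (p : ℕ) (hp : p.Prime) (lam : ℕ → ℝ)
    (hbound : ∀ n : ℕ, 1 ≤ n → |lam n| ≤ n.divisors.card)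
    (hhecke : ∀ m n : ℕ, 1 ≤ m → 1 ≤ n →
      lam m * lam n = ∑ d ∈ (Nat.gcd m n).divisors, lam (m * n / d ^ 2))
    (s : ℝ) (hs : 1 < s)
    (c : ℕ → ℝ) (hc0 : c 0 = 1) (hc1 : c 1 = lam p / (1 + (p : ℝ) ^ (-s)))
    (hcr : ∀ r : ℕ, 2 ≤ r → c r = lam p * c (r - 1) - c (r - 2)) :
    ∀ r : ℕ,
      Summable (fun n : ℕ => lam n * lam (n * p ^ r) * (n : ℝ) ^ (-s)) ∧
      Summable (fun n : ℕ => lam n ^ 2 * (n : ℝ) ^ (-s)) ∧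
      (∑' n : ℕ, lam n * lam (n * p ^ r) * (n : ℝ) ^ (-s))
        = c r * ∑' n : ℕ, lam n ^ 2 * (n : ℝ) ^ (-s) := by
  have hs₀ : s ≠ 0 := (zero_lt_one.trans hs).ne'
  have hsq := summable_sq_mul_rpow_of_abs_le_card_divisors hs hbound
  refine fun r => ⟨hsq.mul_comp_mul_rpow (pow_ne_zero r hp.ne_zero), hsq, ?_⟩
  refine eq_mul_of_two_step_recurrence
    (u := fun r => ∑' n : ℕ, lam n * lam (n * p ^ r) * (n : ℝ) ^ (-s)) ?_ ?_
    (tsum_mul_comp_mul_prime_pow_add_two hhecke hp hs₀ hsq) (fun k => hcr (k + 2) (by omega)) r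
  · simp [hc0, sq]
  · rw [hc1, pow_one, div_mul_eq_mul_div, eq_div_iff (by positivity), mul_comm]
    exact one_add_rpow_mul_tsum_mul_comp_mul_prime hhecke hp hs₀ hsq
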